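/- Let (s, I_L) be a Bell inequality, i.e., every behaviour of local-hidden-variable form satisfies ∑_{a,x} s(a;x)·P(a|x) ≤ I_L. Let P be any joint probability distribution on Λ × (X₁×…×X_N) × (A₁×…×A_N) and K a post-selection such that P(λ, x, K=1) > 0 for every λ and every setting tuple x. If K is safe for P, then the post-selected behaviour satisfies the same Bell inequality: ∑_{a,x} s(a;x) · P(a₁,…,a_N | x₁,…,x_N, K=1) ≤ I_L. -/
import Mathlib


open scoped BigOperators Classical

/-- **Corollary 1: safe post-selection preserves Bell inequalities.** If `(s, I_L)` is
a Bell inequality (every LHV behaviour satisfies `∑ s·P ≤ I_L`), `P(λ, x, K=1) > 0`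
for all `λ, x`, and `K` is safe for `P`, then the post-selected behaviour satisfies
the same Bell inequality. -/
theorem safe_postselection_preserves_Bell_inequalities
    (N : ℕ) (hN : 1 ≤ N)
    (Λ : Type) [Fintype Λ] [Nonempty Λ]
    (X : Fin N → Type) [∀ k, Fintype (X k)] [∀ k, Nonempty (X k)]
    (A : Fin N → Type) [∀ k, Fintype (A k)] [∀ k, Nonempty (A k)]
    (P : Λ → (∀ k, X k) → (∀ k, A k) → ℝ)
    (hP0 : ∀ l x a, 0 ≤ P l x a)
    (hP1 : ∑ l : Λ, ∑ x : (∀ k, X k), ∑ a : (∀ k, A k), P l x a = 1)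
    (K : (∀ k, A k) → Bool)
    (hpos : ∀ (l : Λ) (x : ∀ k, X k),
      0 < ∑ a : (∀ k, A k), if K a then P l x a else 0)
    (hsafe :
      (∀ (l : Λ) (x : ∀ k, X k) (a : ∀ k, A k),
      (if K a then P l x a else 0) /
          (∑ a' : (∀ k, A k), if K a' then P l x a' else 0)
        = ∏ k,
            (∑ x' : (∀ j, X j), ∑ a' : (∀ j, A j),
                if x' k = x k ∧ a' k = a k ∧ K a' then P l x' a' else 0) /
            (∑ x' : (∀ j, X j), ∑ a' : (∀ j, A j),
                if x' k = x k ∧ K a' then P l x' a' else 0))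
      ∧
      (∀ (l : Λ) (x : ∀ k, X k),
      (∑ a : (∀ k, A k), if K a then P l x a else 0) /
          (∑ l' : Λ, ∑ a : (∀ k, A k), if K a then P l' x a else 0)
        = (∑ x' : (∀ k, X k), ∑ a : (∀ k, A k), if K a then P l x' a else 0) /
          (∑ l' : Λ, ∑ x' : (∀ k, X k), ∑ a : (∀ k, A k),
              if K a then P l' x' a else 0)))
    (s : (∀ k, A k) → (∀ k, X k) → ℝ) (IL : ℝ)
    (hBell : ∀ (Λ' : Type) [Fintype Λ'] (q' : Λ' → ℝ)
        (p' : ∀ k, X k → Λ' → A k → ℝ),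
      (∀ l, 0 ≤ q' l) → (∑ l : Λ', q' l = 1) →
      (∀ k xk l ak, 0 ≤ p' k xk l ak) →
      (∀ k xk l, ∑ ak : A k, p' k xk l ak = 1) →
      ∑ x : (∀ k, X k), ∑ a : (∀ k, A k),
          s a x * (∑ l : Λ', q' l * ∏ k, p' k (x k) l (a k)) ≤ IL) :
    ∑ x : (∀ k, X k), ∑ a : (∀ k, A k),
      s a x * ((∑ l : Λ, if K a then P l x a else 0) /
        (∑ l : Λ, ∑ a' : (∀ k, A k), if K a' then P l x a' else 0)) ≤ IL := by
  classical
  obtain ⟨hloc, hfree⟩ := hsafe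
  -- abbreviations
  have hZpos : ∀ (l : Λ) (x : ∀ k, X k),
      0 < ∑ a : (∀ k, A k), if K a then P l x a else 0 := hpos
  have hSpos : ∀ (x : ∀ k, X k),
      0 < ∑ l : Λ, ∑ a : (∀ k, A k), if K a then P l x a else 0 :=
    fun x => Finset.sum_pos (fun l _ => hZpos l x) Finset.univ_nonempty
  have hWpos : ∀ (l : Λ),
      0 < ∑ x : (∀ k, X k), ∑ a : (∀ k, A k), if K a then P l x a else 0 :=
    fun l => Finset.sum_pos (fun x _ => hZpos l x) Finset.univ_nonempty
  have hWtpos :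
      0 < ∑ l : Λ, ∑ x : (∀ k, X k), ∑ a : (∀ k, A k), if K a then P l x a else 0 :=
    Finset.sum_pos (fun l _ => hWpos l) Finset.univ_nonempty
  set q' : Λ → ℝ := fun l =>
    (∑ x : (∀ k, X k), ∑ a : (∀ k, A k), if K a then P l x a else 0) /
    (∑ l' : Λ, ∑ x : (∀ k, X k), ∑ a : (∀ k, A k), if K a then P l' x a else 0) with hq'def
  set p' : ∀ k, X k → Λ → A k → ℝ := fun k xk l ak =>
    (∑ x' : (∀ j, X j), ∑ a' : (∀ j, A j),
        if x' k = xk ∧ a' k = ak ∧ K a' then P l x' a' else 0) /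
    (∑ x' : (∀ j, X j), ∑ a' : (∀ j, A j),
        if x' k = xk ∧ K a' then P l x' a' else 0) with hp'def
  have hDpos : ∀ (k : Fin N) (xk : X k) (l : Λ),
      0 < ∑ x' : (∀ j, X j), ∑ a' : (∀ j, A j),
          if x' k = xk ∧ K a' then P l x' a' else 0 := by
    intro k xk l
    have hrw : ∀ x' : (∀ j, X j),
        (∑ a' : (∀ j, A j), if x' k = xk ∧ K a' then P l x' a' else 0)
        = if x' k = xk then (∑ a' : (∀ j, A j), if K a' then P l x' a' else 0) else 0 := by
      intro x'
      by_cases h : x' k = xk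
      · simp [h]
      · simp [h]
    rw [Finset.sum_congr rfl (fun x' _ => hrw x')]
    refine Finset.sum_pos' (fun x' _ => ?_) ?_
    · split
      · exact (hZpos l x').le
      · exact le_refl 0
    · refine ⟨Function.update (Classical.arbitrary _) k xk, Finset.mem_univ _, ?_⟩
      simp [hZpos l _]
  have hq0 : ∀ l, 0 ≤ q' l := fun l => div_nonneg (hWpos l).le hWtpos.le
  have hq1 : ∑ l : Λ, q' l = 1 := by
    rw [hq'def, ← Finset.sum_div, div_self hWtpos.ne']
  have hp0 : ∀ k xk l ak, 0 ≤ p' k xk l ak := by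
    intro k xk l ak
    refine div_nonneg ?_ (hDpos k xk l).le
    refine Finset.sum_nonneg fun x' _ => Finset.sum_nonneg fun a' _ => ?_
    split
    · exact hP0 _ _ _
    · exact le_refl 0
  have hp1 : ∀ k xk l, ∑ ak : A k, p' k xk l ak = 1 := by
    intro k xk l
    rw [hp'def]
    simp only
    rw [← Finset.sum_div, div_eq_one_iff_eq (hDpos k xk l).ne']
    rw [Finset.sum_comm]
    refine Finset.sum_congr rfl fun x' _ => ?_
    rw [Finset.sum_comm]
    refine Finset.sum_congr rfl fun a' _ => ?_
    by_cases h1 : x' k = xk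
    · by_cases h2 : K a'
      · rw [Finset.sum_eq_single (a' k)]
        · simp [h1, h2]
        · intro b _ hb; simp [Ne.symm hb]
        · intro h; exact absurd (Finset.mem_univ _) h
      · simp [h2]
    · simp [h1]
  have key : ∀ (x : ∀ k, X k) (a : ∀ k, A k),
      (∑ l : Λ, if K a then P l x a else 0) /
        (∑ l : Λ, ∑ a' : (∀ k, A k), if K a' then P l x a' else 0)
      = ∑ l : Λ, q' l * ∏ k, p' k (x k) l (a k) := by
    intro x a
    rw [Finset.sum_div]
    refine Finset.sum_congr rfl fun l _ => ?_
    have h1 : (∏ k, p' k (x k) l (a k))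
        = (if K a then P l x a else 0) /
          (∑ a' : (∀ k, A k), if K a' then P l x a' else 0) := (hloc l x a).symm
    have h2 : q' l = (∑ a' : (∀ k, A k), if K a' then P l x a' else 0) /
        (∑ l' : Λ, ∑ a' : (∀ k, A k), if K a' then P l' x a' else 0) := (hfree l x).symm
    rw [h1, h2, div_mul_div_comm, mul_comm]
    rw [mul_div_mul_right _ _ (hZpos l x).ne']
  calc ∑ x : (∀ k, X k), ∑ a : (∀ k, A k),
      s a x * ((∑ l : Λ, if K a then P l x a else 0) /
        (∑ l : Λ, ∑ a' : (∀ k, A k), if K a' then P l x a' else 0))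
      = ∑ x : (∀ k, X k), ∑ a : (∀ k, A k),
          s a x * (∑ l : Λ, q' l * ∏ k, p' k (x k) l (a k)) := by
        refine Finset.sum_congr rfl fun x _ => Finset.sum_congr rfl fun a _ => ?_
        rw [key x a]
    _ ≤ IL := hBell Λ q' p' hq0 hq1 hp0 hp1
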